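/- Consider an ALG-schedule and a reference time t ≥ 0. For a job j, let t_j = sup{u ≤ t : j is processed at u} be the latest time before or at t at which j is processed. For a job i with r i ≤ t, define H_i = {j ∈ Cl(t) ∖ {i} : t_j ≤ r i and i ∈ R_j}. Then: (a) if i ∈ N(t), then (1−α)·y_i(t) ≤ p_j(t) for every j ∈ H_i; and (b) if i ∉ N(t), then (1−α)·(p i) ≤ p_j(t) for every j ∈ H_i. -/

import Mathlib

open MeasureTheory Set

open scoped Classical

noncomputable section

variable {J : Type*}

/-- Total work done on job `j` by time `u` under the schedule `σ`. -/
def workDone (σ : ℝ → J → ℝ) (j : J) (u : ℝ) : ℝ := ∫ v in (0:ℝ)..u, σ v j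

/-- Remaining processing time of job `j` at time `u`. -/
def remT (p : J → ℝ) (σ : ℝ → J → ℝ) (j : J) (u : ℝ) : ℝ := p j - workDone σ j u

/-- Completion time of job `j`: the least `u` with `workDone σ j u = p j`,
    and `⊤` if the job never completes. -/
def cTime (p : J → ℝ) (σ : ℝ → J → ℝ) (j : J) : EReal :=
  sInf ((fun v : ℝ => (v : EReal)) '' {v : ℝ | workDone σ j v = p j})

/-- Job `j` is available at time `u`: released and not yet completed. -/
def availAt (r p : J → ℝ) (σ : ℝ → J → ℝ) (u : ℝ) (j : J) : Prop :=
  r j ≤ u ∧ (u : EReal) < cTime p σ j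

/-- Job `j` is processed at time `u`. -/
def procAt (σ : ℝ → J → ℝ) (u : ℝ) (j : J) : Prop := 0 < σ u j

/-- Job `j` is non-clairvoyant at time `u`. -/
def ncAt (r p : J → ℝ) (α : ℝ) (σ : ℝ → J → ℝ) (u : ℝ) (j : J) : Prop :=
  availAt r p σ u j ∧ workDone σ j u ≤ α * p j

/-- Job `j` is clairvoyant at time `u`. -/
def clAt (r p : J → ℝ) (α : ℝ) (σ : ℝ → J → ℝ) (u : ℝ) (j : J) : Prop :=
  availAt r p σ u j ∧ α * p j < workDone σ j u

/-- The time at which job `j` emits its signal: the least `u` with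
    `workDone σ j u = α * p j`. -/
def emitT (p : J → ℝ) (α : ℝ) (σ : ℝ → J → ℝ) (j : J) : ℝ :=
  sInf {u : ℝ | workDone σ j u = α * p j}

/-- Data of an instance: nonnegative release dates, positive processing times
    and `α ∈ (0,1)`. -/
structure IsInstance (r p : J → ℝ) (α : ℝ) : Prop where
  r_nonneg : ∀ j, 0 ≤ r j
  p_pos : ∀ j, 0 < p j
  alpha_mem : α ∈ Set.Ioo (0 : ℝ) 1

/-- `σ` is a (feasible, preemptive, single machine) schedule. -/
structure IsSchedule [Fintype J] (r p : J → ℝ) (σ : ℝ → J → ℝ) : Prop where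
  meas : ∀ j, Measurable fun u => σ u j
  nonneg : ∀ u j, 0 ≤ σ u j
  sum_le_one : ∀ u, ∑ j, σ u j ≤ 1
  zero_before_release : ∀ u j, u < r j → σ u j = 0
  workDone_le : ∀ u j, workDone σ j u ≤ p j

/-- A schedule is non-idling if it uses the full machine capacity whenever
    some job is available. -/
def NonIdling [Fintype J] (r p : J → ℝ) (σ : ℝ → J → ℝ) : Prop :=
  ∀ u, (∃ j, availAt r p σ u j) → ∑ j, σ u j = 1

/-- The SRPT condition at time `u`: `Cl(u) ≠ ∅` and
    `min_{j ∈ Cl(u)} p_j(u) ≤ ((1-α)/α) · min_{j ∈ N(u)} y_j(u)`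
    (the minimum over the empty set being `+∞`). -/
def SrptCond (r p : J → ℝ) (α : ℝ) (σ : ℝ → J → ℝ) (u : ℝ) : Prop :=
  ∃ k, clAt r p α σ u k ∧
    ∀ j, ncAt r p α σ u j → remT p σ k u ≤ ((1 - α) / α) * workDone σ j u

/-- `k` is a clairvoyant job of minimal remaining processing time at `u`,
    emitting last among those. -/
def IsSrptChoice (r p : J → ℝ) (α : ℝ) (σ : ℝ → J → ℝ) (u : ℝ) (k : J) : Prop :=
  clAt r p α σ u k ∧
    (∀ j, clAt r p α σ u j → remT p σ k u ≤ remT p σ j u) ∧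
    (∀ j, clAt r p α σ u j → remT p σ j u = remT p σ k u →
      emitT p α σ j ≤ emitT p α σ k)

/-- `j` is a non-clairvoyant job with minimal progress at time `u`. -/
def IsMinNc (r p : J → ℝ) (α : ℝ) (σ : ℝ → J → ℝ) (u : ℝ) (j : J) : Prop :=
  ncAt r p α σ u j ∧ ∀ j', ncAt r p α σ u j' → workDone σ j u ≤ workDone σ j' u

/-- `σ` is an ALG-schedule: non-idling, and at any time with available jobs it
    either runs a single clairvoyant job of shortest remaining processing time
    (breaking ties by latest emission) when the SRPT condition holds, or it runs
    exactly the non-clairvoyant jobs of minimal progress at equal rates. -/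
structure IsALG [Fintype J] (r p : J → ℝ) (α : ℝ) (σ : ℝ → J → ℝ) : Prop where
  sched : IsSchedule r p σ
  nonidling : NonIdling r p σ
  srpt_branch : ∀ u, (∃ j, availAt r p σ u j) → SrptCond r p α σ u →
    ∃ k, IsSrptChoice r p α σ u k ∧ ∀ j, j ≠ k → σ u j = 0
  setf_branch : ∀ u, (∃ j, availAt r p σ u j) → ¬ SrptCond r p α σ u →
    (∀ j, procAt σ u j → IsMinNc r p α σ u j) ∧
    (∀ j j', IsMinNc r p α σ u j → IsMinNc r p α σ u j' → σ u j = σ u j')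

/-- Right endpoint `min (C_j, t)` of the lifetime of `j` w.r.t. reference time `t`. -/
def lifeEnd (p : J → ℝ) (σ : ℝ → J → ℝ) (t : ℝ) (j : J) : ℝ :=
  (min (cTime p σ j) (t : EReal)).toReal

/-- The lifetime `I_j = [r j, min (C_j, t)]` of job `j`. -/
def lifetime (r p : J → ℝ) (σ : ℝ → J → ℝ) (t : ℝ) (j : J) : Set ℝ :=
  Set.Icc (r j) (lifeEnd p σ t j)

/-- `E_N`-edge of the borrow graph: `i` is processed at some time of `I_j`
    while being non-clairvoyant. -/
def ENedge (r p : J → ℝ) (α : ℝ) (σ : ℝ → J → ℝ) (t : ℝ) (j i : J) : Prop :=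
  ∃ u ∈ lifetime r p σ t j, procAt σ u i ∧ ncAt r p α σ u i

/-- `E_C`-edge of the borrow graph: `i` is processed at some time of `I_j`
    while being clairvoyant. -/
def ECedge (r p : J → ℝ) (α : ℝ) (σ : ℝ → J → ℝ) (t : ℝ) (j i : J) : Prop :=
  ∃ u ∈ lifetime r p σ t j, procAt σ u i ∧ clAt r p α σ u i

/-- Edge of the borrow graph `G_B`. -/
def borrowEdge (r p : J → ℝ) (α : ℝ) (σ : ℝ → J → ℝ) (t : ℝ) (j i : J) : Prop :=
  ENedge r p α σ t j i ∨ ECedge r p α σ t j i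

/-- `reaches j i` iff `i ∈ R_j`, i.e. `i` is reachable from `j` in the borrow
    graph (`j` itself included). -/
def reaches (r p : J → ℝ) (α : ℝ) (σ : ℝ → J → ℝ) (t : ℝ) : J → J → Prop :=
  Relation.ReflTransGen (borrowEdge r p α σ t)

/-- Truncated progress `ȳ_j = min (y_j(t), α p_j)`. -/
def truncY (p : J → ℝ) (α : ℝ) (σ : ℝ → J → ℝ) (t : ℝ) (j : J) : ℝ :=
  min (workDone σ j t) (α * p j)

end

/-! Since `j` is clairvoyant at `t` and not processed on `(r i, t]`, it is clairvoyant with the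
constant remaining time `p_j(t)` throughout `[r i, t]`. At any time `u` at which `i` is processed
while non-clairvoyant, the SRPT condition fails, so `i` has least progress among the
non-clairvoyant jobs and some non-clairvoyant `j'` has `((1-α)/α)·y_i(u) ≤ ((1-α)/α)·y_{j'}(u) < p_j(t)`.
As `i` is processed at progress levels arbitrarily close below any `c ≤ min (y_i(t), α p_i)`, this
gives `((1-α)/α)·c ≤ p_j(t)`; take `c = y_i(t)` for (a) and `c = α p_i` for (b). -/

lemma workDone_zero {J : Type*} (σ : ℝ → J → ℝ) (j : J) : workDone σ j 0 = 0 :=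
  intervalIntegral.integral_same

lemma le_of_sSup_procAt_le {J : Type*} {σ : ℝ → J → ℝ} {j : J} {t a w : ℝ}
    (hjt : sSup {u : ℝ | u ≤ t ∧ procAt σ u j} ≤ a) (hwt : w ≤ t) (hw : procAt σ w j) : w ≤ a :=
  (le_csSup ⟨t, fun _ hv => hv.1⟩ (show w ∈ {u : ℝ | u ≤ t ∧ procAt σ u j} from ⟨hwt, hw⟩)).trans hjt

namespace IsSchedule

variable {J : Type*} [Fintype J] {r p : J → ℝ} {σ : ℝ → J → ℝ}

lemma apply_le_one (hs : IsSchedule r p σ) (u : ℝ) (j : J) : σ u j ≤ 1 :=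
  (Finset.single_le_sum (fun j _ => hs.nonneg u j) (Finset.mem_univ j)).trans (hs.sum_le_one u)

lemma intervalIntegrable (hs : IsSchedule r p σ) (j : J) (a b : ℝ) :
    IntervalIntegrable (fun v => σ v j) volume a b := by
  refine IntervalIntegrable.mono_fun' (g := fun _ => 1) intervalIntegrable_const
    (hs.meas j).aestronglyMeasurable.restrict (Filter.Eventually.of_forall fun v => ?_)
  simpa only [Real.norm_eq_abs, abs_of_nonneg (hs.nonneg v j)] using hs.apply_le_one v j

lemma workDone_add_integral (hs : IsSchedule r p σ) (j : J) (a b : ℝ) :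
    workDone σ j a + ∫ v in a..b, σ v j = workDone σ j b :=
  intervalIntegral.integral_add_adjacent_intervals (hs.intervalIntegrable j 0 a)
    (hs.intervalIntegrable j a b)

lemma workDone_mono (hs : IsSchedule r p σ) (j : J) : Monotone (workDone σ j) := by
  intro a b hab
  rw [← hs.workDone_add_integral j a b]
  have := intervalIntegral.integral_nonneg (μ := volume) hab fun u _ => hs.nonneg u j
  linarith

lemma continuous_workDone (hs : IsSchedule r p σ) (j : J) : Continuous (workDone σ j) :=
  intervalIntegral.continuous_primitive (hs.intervalIntegrable j) 0

lemma workDone_nonneg (hs : IsSchedule r p σ) (j : J) {u : ℝ} (hu : 0 ≤ u) :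
    0 ≤ workDone σ j u :=
  workDone_zero σ j ▸ hs.workDone_mono j hu

lemma release_le_of_procAt (hs : IsSchedule r p σ) {j : J} {u : ℝ} (h : procAt σ u j) :
    r j ≤ u :=
  not_lt.1 fun hu => h.ne' (hs.zero_before_release u j hu)

lemma workDone_eq_of_forall_not_procAt (hs : IsSchedule r p σ) (j : J) {a b : ℝ} (hab : a ≤ b)
    (h : ∀ u ∈ Ioc a b, ¬ procAt σ u j) : workDone σ j a = workDone σ j b := by
  have hz : ∀ u ∈ Ioc a b, σ u j = 0 := fun u hu => le_antisymm (not_lt.1 (h u hu)) (hs.nonneg u j)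
  rw [← hs.workDone_add_integral j a b, intervalIntegral.integral_of_le hab,
    setIntegral_eq_zero_of_forall_eq_zero hz, add_zero]

lemma exists_procAt_of_workDone_lt (hs : IsSchedule r p σ) (j : J) {a b : ℝ} (hab : a ≤ b)
    (h : workDone σ j a < workDone σ j b) : ∃ u ∈ Ioc a b, procAt σ u j := by
  by_contra! hnot
  exact h.ne (hs.workDone_eq_of_forall_not_procAt j hab hnot)

lemma exists_procAt_workDone_mem_Icc (hs : IsSchedule r p σ) (j : J) {t a b : ℝ} (ht : 0 ≤ t)
    (ha : 0 ≤ a) (hab : a < b) (hb : b ≤ workDone σ j t) :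
    ∃ u ≤ t, procAt σ u j ∧ workDone σ j u ∈ Icc a b := by
  have hivt {s : ℝ} (hs₀ : 0 ≤ s) : Icc 0 (workDone σ j s) ⊆ workDone σ j '' Icc 0 s := by
    simpa only [workDone_zero] using
      intermediate_value_Icc hs₀ (hs.continuous_workDone j).continuousOn
  obtain ⟨v, ⟨hv₀, hvt⟩, hvb⟩ := hivt ht ⟨ha.trans hab.le, hb⟩
  obtain ⟨w, ⟨-, hwv⟩, hwa⟩ := hivt hv₀ ⟨ha, hvb ▸ hab.le⟩
  obtain ⟨u, ⟨hwu, huv⟩, hu⟩ := hs.exists_procAt_of_workDone_lt j hwv (by rw [hwa, hvb]; exact hab)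
  exact ⟨u, huv.trans hvt, hu, hwa ▸ hs.workDone_mono j hwu.le, hvb ▸ hs.workDone_mono j huv⟩

lemma lt_cTime_iff (hs : IsSchedule r p σ) {j : J} {u : ℝ} :
    (u : EReal) < cTime p σ j ↔ workDone σ j u < p j := by
  refine ⟨fun h => (hs.workDone_le u j).lt_of_ne fun hu => h.not_ge (sInf_le ⟨u, hu, rfl⟩),
    fun h => ?_⟩
  obtain ⟨u', huu', hu'⟩ :=
    (((hs.continuous_workDone j).tendsto u).eventually (gt_mem_nhds h)).exists_gt
  refine (EReal.coe_lt_coe_iff.2 huu').trans_le (le_sInf ?_)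
  rintro _ ⟨v, hv, rfl⟩
  exact EReal.coe_le_coe_iff.2 <| not_lt.1 fun hvu' =>
    hu'.not_ge (hv ▸ hs.workDone_mono j hvu'.le)

lemma remT_nonneg (hs : IsSchedule r p σ) (j : J) (u : ℝ) : 0 ≤ remT p σ j u :=
  sub_nonneg.2 (hs.workDone_le u j)

lemma mul_lt_workDone_of_not_ncAt (hs : IsSchedule r p σ) {α t : ℝ} {i : J} (hi : r i ≤ t)
    (hαp : α * p i < p i) (h : ¬ ncAt r p α σ t i) : α * p i < workDone σ i t := by
  by_contra! hle
  exact h ⟨⟨hi, hs.lt_cTime_iff.2 (hle.trans_lt hαp)⟩, hle⟩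

lemma workDone_eq_of_sSup_procAt_le (hs : IsSchedule r p σ) {j : J} {t a u : ℝ}
    (hjt : sSup {u : ℝ | u ≤ t ∧ procAt σ u j} ≤ a) (hau : a ≤ u) (hut : u ≤ t) :
    workDone σ j u = workDone σ j t :=
  hs.workDone_eq_of_forall_not_procAt j hut fun _ hw hproc =>
    hw.1.not_ge ((le_of_sSup_procAt_le hjt hw.2 hproc).trans hau)

lemma clAt_of_sSup_procAt_le (hs : IsSchedule r p σ) {α t a u : ℝ} {j : J} (ht : 0 ≤ t)
    (hjcl : clAt r p α σ t j) (hj : 0 < workDone σ j t)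
    (hjt : sSup {u : ℝ | u ≤ t ∧ procAt σ u j} ≤ a) (hau : a ≤ u) (hut : u ≤ t) :
    clAt r p α σ u j := by
  obtain ⟨w, hw, hproc⟩ := hs.exists_procAt_of_workDone_lt j ht (by rwa [workDone_zero])
  have hrj : r j ≤ a :=
    (hs.release_le_of_procAt hproc).trans (le_of_sSup_procAt_le hjt hw.2 hproc)
  have heq := hs.workDone_eq_of_sSup_procAt_le hjt hau hut
  exact ⟨⟨hrj.trans hau, hs.lt_cTime_iff.2 (heq ▸ hs.lt_cTime_iff.1 hjcl.1.2)⟩, heq ▸ hjcl.2⟩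

end IsSchedule

namespace IsALG

variable {J : Type*} [Fintype J] {r p : J → ℝ} {α : ℝ} {σ : ℝ → J → ℝ}

lemma not_srptCond_of_procAt_ncAt (halg : IsALG r p α σ) {u : ℝ} {i : J}
    (hproc : procAt σ u i) (hnc : ncAt r p α σ u i) : ¬ SrptCond r p α σ u := by
  intro hsrpt
  obtain ⟨k, hk, hzero⟩ := halg.srpt_branch u ⟨i, hnc.1⟩ hsrpt
  obtain rfl : i = k := by_contra fun hik => hproc.ne' (hzero i hik)
  exact hnc.2.not_gt hk.1.2

lemma mul_workDone_lt_remT (halg : IsALG r p α σ) (hα0 : 0 ≤ α) (hα1 : α ≤ 1) {u : ℝ} {i k : J}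
    (hproc : procAt σ u i) (hnc : ncAt r p α σ u i) (hk : clAt r p α σ u k) :
    (1 - α) / α * workDone σ i u < remT p σ k u := by
  have hsrpt := halg.not_srptCond_of_procAt_ncAt hproc hnc
  have hmin := (halg.setf_branch u ⟨i, hnc.1⟩ hsrpt).1 i hproc
  obtain ⟨j, hj, hlt⟩ : ∃ j, ncAt r p α σ u j ∧ (1 - α) / α * workDone σ j u < remT p σ k u := by
    by_contra! h
    exact hsrpt ⟨k, hk, h⟩
  calc (1 - α) / α * workDone σ i u
      ≤ (1 - α) / α * workDone σ j u :=
        mul_le_mul_of_nonneg_left (hmin.2 j hj) (div_nonneg (sub_nonneg.2 hα1) hα0)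
    _ < remT p σ k u := hlt

lemma mul_le_remT_of_le_workDone (halg : IsALG r p α σ) (hα0 : 0 ≤ α) (hα1 : α ≤ 1)
    {t : ℝ} (ht : 0 ≤ t) {i j : J} (hαp : α * p i < p i) (hjcl : clAt r p α σ t j)
    (hj : 0 < workDone σ j t) (hjt : sSup {u : ℝ | u ≤ t ∧ procAt σ u j} ≤ r i) {c : ℝ}
    (hc : c ≤ workDone σ i t) (hcα : c ≤ α * p i) :
    (1 - α) / α * c ≤ remT p σ j t := by
  have hs := halg.sched
  have hK : 0 ≤ (1 - α) / α := div_nonneg (sub_nonneg.2 hα1) hα0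
  rcases le_or_gt c 0 with hc0 | hc0
  · exact (mul_nonpos_of_nonneg_of_nonpos hK hc0).trans (hs.remT_nonneg j t)
  refine le_of_tendsto (x := nhdsWithin c (Iio c))
    (((continuous_const_mul _).tendsto c).mono_left nhdsWithin_le_nhds) ?_
  filter_upwards [Ioo_mem_nhdsLT hc0] with a ⟨ha0, hac⟩
  obtain ⟨u, hut, hproc, hau, huc⟩ := hs.exists_procAt_workDone_mem_Icc i ht ha0.le hac hc
  have hiu := hs.release_le_of_procAt hproc
  have hnc : ncAt r p α σ u i := ⟨⟨hiu, hs.lt_cTime_iff.2 (by linarith)⟩, huc.trans hcα⟩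
  have hjcl' := hs.clAt_of_sSup_procAt_le ht hjcl hj hjt hiu hut
  have hrem : remT p σ j u = remT p σ j t := by
    rw [remT, remT, hs.workDone_eq_of_sSup_procAt_le hjt hiu hut]
  calc (1 - α) / α * a
      ≤ (1 - α) / α * workDone σ i u := by gcongr
    _ ≤ remT p σ j u := (halg.mul_workDone_lt_remT hα0 hα1 hproc hnc hjcl').le
    _ = remT p σ j t := hrem

end IsALG

theorem stmt17_general {J : Type*} [Fintype J] {r p : J → ℝ} {α : ℝ} {σ : ℝ → J → ℝ}
    (hinst : IsInstance r p α) (halg : IsALG r p α σ) (t : ℝ) (ht : 0 ≤ t)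
    (i : J) (hi : r i ≤ t) (j : J) (hjcl : clAt r p α σ t j)
    (hjt : sSup {u : ℝ | u ≤ t ∧ procAt σ u j} ≤ r i) :
    (ncAt r p α σ t i → (1 - α) * workDone σ i t ≤ remT p σ j t) ∧
      (¬ ncAt r p α σ t i → (1 - α) * p i ≤ remT p σ j t) := by
  obtain ⟨hα0, hα1⟩ := hinst.alpha_mem
  have hs := halg.sched
  have hαp : α * p i < p i := mul_lt_of_lt_one_left (hinst.p_pos i) hα1
  have hj : 0 < workDone σ j t := (mul_pos hα0 (hinst.p_pos j)).trans hjcl.2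
  have key {c : ℝ} := halg.mul_le_remT_of_le_workDone hα0.le hα1.le ht hαp hjcl hj hjt (c := c)
  refine ⟨fun hnc => ?_, fun hnc => ?_⟩
  · calc (1 - α) * workDone σ i t
        ≤ (1 - α) / α * workDone σ i t := by
          gcongr
          · exact hs.workDone_nonneg i ht
          · exact le_div_self (sub_nonneg.2 hα1.le) hα0 hα1.le
      _ ≤ remT p σ j t := key le_rfl hnc.2
  · calc (1 - α) * p i = (1 - α) / α * (α * p i) := by field_simp
      _ ≤ remT p σ j t := key (hs.mul_lt_workDone_of_not_ncAt hi hαp hnc).le le_rfl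

/-- For a job `i` released by time `t` and any
`j ∈ H_i = {j ∈ Cl(t) ∖ {i} : t_j ≤ r i and i ∈ R_j}` (with `t_j` the latest
time before or at `t` at which `j` is processed): (a) if `i ∈ N(t)` then
`(1-α)·y_i(t) ≤ p_j(t)`; (b) if `i ∉ N(t)` then `(1-α)·p_i ≤ p_j(t)`. -/
theorem stmt17 {J : Type*} [Fintype J] {r p : J → ℝ} {α : ℝ} {σ : ℝ → J → ℝ}
    (hinst : IsInstance r p α) (halg : IsALG r p α σ) (t : ℝ) (ht : 0 ≤ t)
    (i : J) (hi : r i ≤ t) (j : J) (hjcl : clAt r p α σ t j) (hji : j ≠ i)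
    (hjt : sSup {u : ℝ | u ≤ t ∧ procAt σ u j} ≤ r i)
    (hjR : reaches r p α σ t j i) :
    (ncAt r p α σ t i → (1 - α) * workDone σ i t ≤ remT p σ j t) ∧
      (¬ ncAt r p α σ t i → (1 - α) * p i ≤ remT p σ j t) :=
  stmt17_general hinst halg t ht i hi j hjcl hjt
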